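/- arXiv:1412.0188 — 2 statements merged into one kernel-verified Lean document; each statement's English description precedes it below -/
import Mathlib

section
/- Let A be a finite-dimensional algebra over a field, u : X → Y a left minimal almost split morphism in mod A, Z a finitely generated A-module, and v ∈ rad^{n+1}(X, Z) for some n ≥ 0. Then there exists w ∈ rad^n(Y, Z) such that v = w ∘ u. -/
open CategoryTheory

universe v u

/-- A finitely generated module object is indecomposable: nontrivial and
its only idempotent endomorphisms are `0` and the identity. -/
def IsIndecO (A : Type u) [Ring A] (M : ModuleCat.{v} A) : Prop :=
  Nontrivial M ∧ ∀ e : M ⟶ M, e ≫ e = e → e = 0 ∨ e = 𝟙 M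

/-- `f` lies in the radical of the category of finitely generated modules. -/
def IsRad (A : Type u) [Ring A] {M N : ModuleCat.{v} A} (f : M ⟶ N) : Prop :=
  ∀ X : ModuleCat.{v} A, Module.Finite A X → IsIndecO A X →
    ∀ (u : X ⟶ M) (v : N ⟶ X), ¬ IsIso (u ≫ f ≫ v)

/-- `IsRadPow A n f` : `f` lies in the `n`-th power of the radical. -/
def IsRadPow (A : Type u) [Ring A] : ∀ (_ : ℕ) {M N : ModuleCat.{v} A}, (M ⟶ N) → Prop
  | 0, _, _, _ => True
  | (n+1), M, N, f => ∃ (m : ℕ) (Z : Fin m → ModuleCat.{v} A)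
      (h : ∀ i, M ⟶ Z i) (g : ∀ i, Z i ⟶ N),
      (∀ i, IsRad A (h i)) ∧ (∀ i, IsRadPow A n (g i)) ∧ f = ∑ i, h i ≫ g i
/-- `u : X ⟶ Y` is left minimal almost split: it is not a split monomorphism,
every morphism out of `X` which is not a split monomorphism factors through `u`,
and `u` is left minimal. -/
def IsLeftMinimalAlmostSplit (A : Type u) [Ring A] {X Y : ModuleCat.{v} A}
    (u : X ⟶ Y) : Prop :=
  (¬ ∃ r : Y ⟶ X, u ≫ r = 𝟙 X) ∧
  (∀ (Z : ModuleCat.{v} A) (f : X ⟶ Z), (¬ ∃ r : Z ⟶ X, f ≫ r = 𝟙 X) →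
      ∃ g : Y ⟶ Z, u ≫ g = f) ∧
  (∀ h : Y ⟶ Y, u ≫ h = u → IsIso h)

/-!
Write `v = ∑ hᵢ ≫ gᵢ` with `hᵢ` radical and `gᵢ ∈ rad^n`. A radical morphism out of a nonzero
module `X` is not a split monomorphism: a retraction would make the identity of an indecomposable
direct summand of `X` factor through it. Hence each `hᵢ` factors as `u ≫ g'ᵢ`, and
`w = ∑ g'ᵢ ≫ gᵢ` lies in `rad^n`, which is closed under sums and precomposition.
Indecomposable summands exist because finitely generated modules over the Artinian ring `A` are
Artinian: the image of an idempotent that is minimal among nonzero such images is indecomposable.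
-/

section Radical

variable {A : Type u} [Ring A]

theorem IsRad.precomp {M N P : ModuleCat.{v} A} (a : P ⟶ M) {f : M ⟶ N} (hf : IsRad A f) :
    IsRad A (a ≫ f) := fun W hW hind i p hiso => hf W hW hind (i ≫ a) p (by simpa using hiso)

theorem IsRadPow.precomp {n : ℕ} {M N P : ModuleCat.{v} A} (a : P ⟶ M) {f : M ⟶ N}
    (hf : IsRadPow A n f) : IsRadPow A n (a ≫ f) := by
  cases n with
  | zero => trivial
  | succ n =>
    obtain ⟨m, Z, h, g, hh, hg, rfl⟩ := hf
    exact ⟨m, Z, fun i => a ≫ h i, g, fun i => (hh i).precomp a, hg, by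
      simp only [Preadditive.comp_sum, Category.assoc]⟩

theorem isRadPow_succ_sum {ι : Type*} [Fintype ι] {n : ℕ} {M N : ModuleCat.{v} A}
    (Z : ι → ModuleCat.{v} A) (h : ∀ i, M ⟶ Z i) (g : ∀ i, Z i ⟶ N)
    (hh : ∀ i, IsRad A (h i)) (hg : ∀ i, IsRadPow A n (g i)) :
    IsRadPow A (n + 1) (∑ i, h i ≫ g i) := by
  let e := (Fintype.equivFin ι).symm
  exact ⟨_, fun j => Z (e j), fun j => h (e j), fun j => g (e j), fun j => hh (e j),
    fun j => hg (e j), (Fintype.sum_equiv e _ _ fun _ => rfl).symm⟩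

theorem isRadPow_zero (n : ℕ) (M N : ModuleCat.{v} A) : IsRadPow A n (0 : M ⟶ N) := by
  cases n with
  | zero => trivial
  | succ n =>
    simpa using isRadPow_succ_sum (n := n) (M := M) (N := N) Empty.elim
      (fun i => i.elim) (fun i => i.elim) (fun i => i.elim) (fun i => i.elim)

theorem IsRadPow.add {n : ℕ} {M N : ModuleCat.{v} A} {f f' : M ⟶ N} (hf : IsRadPow A n f)
    (hf' : IsRadPow A n f') : IsRadPow A n (f + f') := by
  cases n with
  | zero => trivial
  | succ n =>
    obtain ⟨m, Z, h, g, hh, hg, rfl⟩ := hf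
    obtain ⟨m', Z', h', g', hh', hg', rfl⟩ := hf'
    have hsum := isRadPow_succ_sum (Sum.elim Z Z') (Sum.rec h h') (Sum.rec g g')
      (Sum.rec hh hh') (Sum.rec hg hg')
    rwa [Fintype.sum_sum_type] at hsum

theorem isRadPow_sum {n : ℕ} {M N : ModuleCat.{v} A} {ι : Type*} (s : Finset ι)
    (f : ι → (M ⟶ N)) (hf : ∀ i ∈ s, IsRadPow A n (f i)) : IsRadPow A n (∑ i ∈ s, f i) :=
  Finset.sum_induction f _ (fun _ _ => IsRadPow.add) (isRadPow_zero n M N) hf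

end Radical

section Indecomposable

variable {A : Type u} [Ring A]

theorem ModuleCat.eq_id_of_idempotent_of_surjective {M : ModuleCat.{v} A} {f : M ⟶ M}
    (hf : f ≫ f = f) (hs : Function.Surjective f) : f = 𝟙 M := by
  ext x
  obtain ⟨y, rfl⟩ := hs x
  exact congr($hf y)

theorem exists_isIndecO_retract (M : ModuleCat.{v} A) [IsArtinian A M] [Nontrivial M] :
    ∃ (W : ModuleCat.{v} A) (i : W ⟶ M) (p : M ⟶ W), IsIndecO A W ∧ i ≫ p = 𝟙 W := by
  obtain ⟨_, ⟨hN, e, he, rfl⟩, hmin⟩ := (wellFounded_lt (α := Submodule A M)).has_min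
    {N | N ≠ ⊥ ∧ ∃ e : M ⟶ M, e ≫ e = e ∧ LinearMap.range e.hom = N}
    ⟨⊤, top_ne_bot, 𝟙 M, Category.id_comp _, LinearMap.range_id⟩
  let W := ModuleCat.of A (LinearMap.range e.hom)
  let i : W ⟶ M := ModuleCat.ofHom (LinearMap.range e.hom).subtype
  let p : M ⟶ W := ModuleCat.ofHom e.hom.rangeRestrict
  have hip : i ≫ p = 𝟙 W := by
    ext ⟨_, y, rfl⟩
    exact ConcreteCategory.congr_hom he y
  have : Nontrivial W := Submodule.nontrivial_iff_ne_bot.mpr hN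
  refine ⟨W, i, p, ⟨this, fun f hf => or_iff_not_imp_left.mpr fun hf0 => ?_⟩, hip⟩
  apply ModuleCat.eq_id_of_idempotent_of_surjective hf
  have he' : (p ≫ f ≫ i) ≫ p ≫ f ≫ i = p ≫ f ≫ i := by
    simp only [Category.assoc, reassoc_of% hip, reassoc_of% hf]
  have hle : LinearMap.range (p ≫ f ≫ i).hom ≤ LinearMap.range e.hom := by
    rintro _ ⟨y, rfl⟩
    exact (f (p y)).2
  have hne : LinearMap.range (p ≫ f ≫ i).hom ≠ ⊥ := by
    intro h0
    apply hf0
    have hf_eq : f = i ≫ (p ≫ f ≫ i) ≫ p := by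
      simp only [Category.assoc, reassoc_of% hip, hip, Category.comp_id]
    have hzero : p ≫ f ≫ i = 0 := by
      ext y
      exact LinearMap.congr_fun (LinearMap.range_eq_bot.mp h0) y
    rw [hf_eq, hzero, Limits.zero_comp, Limits.comp_zero]
  have heq := hle.lt_or_eq.resolve_left (hmin _ ⟨hne, _, he', rfl⟩)
  intro w
  obtain ⟨y, hy⟩ : i w ∈ LinearMap.range (p ≫ f ≫ i).hom := heq ▸ w.2
  exact ⟨p y, Subtype.ext hy⟩

end Indecomposable

section AlmostSplit

variable {A : Type u} [Ring A]

theorem IsRad.not_exists_retraction [IsArtinianRing A] {M N : ModuleCat.{v} A}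
    (hM : Module.Finite A M) [Nontrivial M] {f : M ⟶ N} (hf : IsRad A f) :
    ¬ ∃ r : N ⟶ M, f ≫ r = 𝟙 M := by
  rintro ⟨r, hr⟩
  obtain ⟨W, i, p, hW, hip⟩ := exists_isIndecO_retract M
  have : Module.Finite A W := Module.Finite.of_surjective p.hom fun w => ⟨i w, congr($hip w)⟩
  refine hf W this hW i (r ≫ p) ?_
  rw [reassoc_of% hr, hip]
  infer_instance

theorem IsLeftMinimalAlmostSplit.nontrivial_source {X Y : ModuleCat.{v} A} {u : X ⟶ Y}
    (hu : IsLeftMinimalAlmostSplit A u) : Nontrivial X := by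
  by_contra hX
  rw [not_nontrivial_iff_subsingleton] at hX
  exact hu.1 ⟨0, by ext x; exact Subsingleton.elim _ _⟩

theorem IsLeftMinimalAlmostSplit.exists_isRadPow_comp_eq [IsArtinianRing A]
    {X Y Z : ModuleCat.{v} A} (hX : Module.Finite A X) {u : X ⟶ Y}
    (hu : IsLeftMinimalAlmostSplit A u) {n : ℕ} {v : X ⟶ Z} (hv : IsRadPow A (n + 1) v) :
    ∃ w : Y ⟶ Z, IsRadPow A n w ∧ v = u ≫ w := by
  have := hu.nontrivial_source
  obtain ⟨m, Z', h, g, hh, hg, rfl⟩ := hv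
  choose g' hg' using fun i => hu.2.1 (Z' i) (h i) ((hh i).not_exists_retraction hX)
  refine ⟨∑ i, g' i ≫ g i, isRadPow_sum _ _ fun i _ => (hg i).precomp (g' i), ?_⟩
  simp only [Preadditive.comp_sum, reassoc_of% hg']

end AlmostSplit

theorem stmt4_general (k : Type u) [Field k] (A : Type u) [Ring A] [Algebra k A]
    [FiniteDimensional k A]
    (X Y Z : ModuleCat.{v} A)
    (hX : Module.Finite A X)
    (u : X ⟶ Y) (hu : IsLeftMinimalAlmostSplit A u)
    (n : ℕ) (v : X ⟶ Z) (hv : IsRadPow A (n + 1) v) :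
    ∃ w : Y ⟶ Z, IsRadPow A n w ∧ v = u ≫ w := by
  have : IsArtinianRing A := .of_finite k A
  exact hu.exists_isRadPow_comp_eq hX hv

/-- Any morphism in `rad^{n+1}` out of the source of a left minimal almost split
morphism factors through it with a factor in `rad^n`. -/
theorem stmt4 (k : Type u) [Field k] (A : Type u) [Ring A] [Algebra k A]
    [FiniteDimensional k A]
    (X Y Z : ModuleCat.{v} A)
    (hX : Module.Finite A X) (hY : Module.Finite A Y) (hZ : Module.Finite A Z)
    (u : X ⟶ Y) (hu : IsLeftMinimalAlmostSplit A u)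
    (n : ℕ) (v : X ⟶ Z) (hv : IsRadPow A (n + 1) v) :
    ∃ w : Y ⟶ Z, IsRadPow A n w ∧ v = u ≫ w :=
  stmt4_general k A X Y Z hX u hu n v hv
end

section
/- Let A be a finite-dimensional algebra over a field and X₁, …, X_{n+1} indecomposable finitely generated A-modules. Suppose there are morphisms f_i, ε_i : X_i → X_{i+1} for 1 ≤ i ≤ n such that each f_i is irreducible, for each i either ε_i = f_i or ε_i ∈ rad², the composite f_n ∘ ⋯ ∘ f_1 = 0, and the composite ε_n ∘ ⋯ ∘ ε_1 ≠ 0. Then ε_n ∘ ⋯ ∘ ε_1 ∈ rad^{n+1} \ {0}, i.e. there exists a nonzero composite of morphisms along the sequence lying in rad^{n+1}. -/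
/-!
Some `ε j` differs from `f j`, for otherwise the composite of the `ε i` would be
`f_n ⋯ f_1 = 0`. That `ε j` lies in `rad²` and every other `ε i` lies in `rad`
(being `f i` or in `rad² ⊆ rad`), so since `rad^a · rad^b ⊆ rad^(a+b)` the composite
lies in `rad^(n+1)`.
-/

open CategoryTheory

universe v u

/-- Composite of the first `n` morphisms along a chain
`X 0 ⟶ X 1 ⟶ X 2 ⟶ ⋯`. -/
def chainComp {A : Type u} [Ring A] (X : ℕ → ModuleCat.{v} A)
    (f : ∀ i, X i ⟶ X (i + 1)) : ∀ n, X 0 ⟶ X n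
  | 0 => 𝟙 (X 0)
  | (n+1) => chainComp X f n ≫ f n

section Radical

variable {A : Type u} [Ring A] {M N P : ModuleCat.{v} A}

theorem IsRad.comp_left (f : M ⟶ N) {g : N ⟶ P} (hg : IsRad A g) : IsRad A (f ≫ g) :=
  fun X hX hind u v hiso => hg X hX hind (u ≫ f) v (by simpa only [Category.assoc] using hiso)

theorem IsRad.isRadPow_one {f : M ⟶ N} (hf : IsRad A f) : IsRadPow A 1 f :=
  ⟨1, fun _ => N, fun _ => f, fun _ => 𝟙 N, fun _ => hf, fun _ => trivial, by simp⟩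

theorem IsRadPow.of_succ {m : ℕ} {f : M ⟶ N} (hf : IsRadPow A (m + 1) f) :
    IsRadPow A m f := by
  induction m generalizing M N with
  | zero => trivial
  | succ m ih =>
    obtain ⟨l, Z, h, g, hh, hg, rfl⟩ := hf
    exact ⟨l, Z, h, g, hh, fun i => ih (hg i), rfl⟩

theorem IsRadPow.comp_left {b : ℕ} (f : M ⟶ N) {g : N ⟶ P} (hg : IsRadPow A b g) :
    IsRadPow A b (f ≫ g) := by
  induction b generalizing M N P with
  | zero => trivial
  | succ b =>
    obtain ⟨m, Z, h, g', hh, hg', rfl⟩ := hg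
    refine ⟨m, Z, fun i => f ≫ h i, g', fun i => (hh i).comp_left f, hg', ?_⟩
    simp only [Preadditive.comp_sum, Category.assoc]

theorem IsRadPow.comp {a b : ℕ} {f : M ⟶ N} {g : N ⟶ P} (hf : IsRadPow A a f)
    (hg : IsRadPow A b g) : IsRadPow A (a + b) (f ≫ g) := by
  induction a generalizing M N with
  | zero => simpa only [zero_add] using hg.comp_left f
  | succ a ih =>
    obtain ⟨m, Z, h, f', hh, hf', rfl⟩ := hf
    rw [Nat.add_right_comm]
    refine ⟨m, Z, h, fun i => f' i ≫ g, hh, fun i => ih (hf' i) hg, ?_⟩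
    simp only [Preadditive.sum_comp, Category.assoc]

end Radical

section Chain

variable {A : Type u} [Ring A] (X : ℕ → ModuleCat.{v} A)

theorem chainComp_congr {f ε : ∀ i, X i ⟶ X (i + 1)} {n : ℕ} (h : ∀ i < n, ε i = f i) :
    chainComp X ε n = chainComp X f n := by
  induction n with
  | zero => rfl
  | succ n ih =>
    rw [chainComp, chainComp, ih fun i hi => h i (by omega), h n n.lt_succ_self]

theorem chainComp_isRadPow_sum (ε : ∀ i, X i ⟶ X (i + 1)) (w : ℕ → ℕ) {n : ℕ}
    (h : ∀ i < n, IsRadPow A (w i) (ε i)) :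
    IsRadPow A (∑ i ∈ Finset.range n, w i) (chainComp X ε n) := by
  induction n with
  | zero => trivial
  | succ n ih =>
    rw [Finset.sum_range_succ]
    exact (ih fun i hi => h i (by omega)).comp (h n n.lt_succ_self)

theorem chainComp_isRadPow_succ (ε : ∀ i, X i ⟶ X (i + 1)) {n j : ℕ} (hj : j < n)
    (hε : ∀ i < n, i ≠ j → IsRadPow A 1 (ε i)) (hεj : IsRadPow A 2 (ε j)) :
    IsRadPow A (n + 1) (chainComp X ε n) := by
  have hsum : ∑ i ∈ Finset.range n, (1 + if i = j then 1 else 0) = n + 1 := by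
    rw [Finset.sum_add_distrib, Finset.sum_ite_eq', if_pos (Finset.mem_range.2 hj)]
    simp
  refine hsum ▸ chainComp_isRadPow_sum X ε _ fun i hi => ?_
  by_cases hij : i = j
  · subst hij
    simpa using hεj
  · simpa [hij] using hε i hi hij

end Chain

theorem stmt14_general (A : Type u) [Ring A]
    (n : ℕ)
    (X : ℕ → ModuleCat.{v} A)
    (f ε : ∀ i, X i ⟶ X (i + 1))
    (hirr : ∀ i < n, IsRad A (f i) ∧ ¬ IsRadPow A 2 (f i))
    (hε : ∀ i < n, ε i = f i ∨ IsRadPow A 2 (ε i))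
    (hf0 : chainComp X f n = 0)
    (hε0 : chainComp X ε n ≠ 0) :
    IsRadPow A (n + 1) (chainComp X ε n) ∧ chainComp X ε n ≠ 0 := by
  obtain ⟨j, hj, hεj⟩ : ∃ j < n, ε j ≠ f j := by
    by_contra! h
    exact hε0 (chainComp_congr X h ▸ hf0)
  refine ⟨chainComp_isRadPow_succ X ε hj (fun i hi _ => ?_) ((hε j hj).resolve_left hεj), hε0⟩
  rcases hε i hi with h | h
  · exact h ▸ (hirr i hi).1.isRadPow_one
  · exact h.of_succ

/-- If `f i : X i ⟶ X (i+1)` are irreducible morphisms between indecomposables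
with `f_n ∘ ⋯ ∘ f_1 = 0`, and `ε i` agrees with `f i` or lies in `rad²`, and the
composite of the `ε i` is nonzero, then this composite lies in
`rad^{n+1} \ {0}`. -/
theorem stmt14 (k : Type u) [Field k] (A : Type u) [Ring A] [Algebra k A]
    [FiniteDimensional k A]
    (n : ℕ) (hn : 1 ≤ n)
    (X : ℕ → ModuleCat.{v} A)
    (hfg : ∀ i ≤ n, Module.Finite A (X i))
    (hind : ∀ i ≤ n, IsIndecO A (X i))
    (f ε : ∀ i, X i ⟶ X (i + 1))
    (hirr : ∀ i < n, IsRad A (f i) ∧ ¬ IsRadPow A 2 (f i))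
    (hε : ∀ i < n, ε i = f i ∨ IsRadPow A 2 (ε i))
    (hf0 : chainComp X f n = 0)
    (hε0 : chainComp X ε n ≠ 0) :
    IsRadPow A (n + 1) (chainComp X ε n) ∧ chainComp X ε n ≠ 0 :=
  stmt14_general A n X f ε hirr hε hf0 hε0
end
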